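/- arXiv:1505.03188 — 2 statements merged into one kernel-verified Lean document; each statement's English description precedes it below -/
import Mathlib

section
/- Let r ≥ 1 and let m_1, …, m_r and n_1, …, n_{r-1} be positive integers. Let G_r be the group with presentation ⟨x_1, …, x_r : x_1^{m_1} = 1, x_1^{n_1} = x_2^{m_2}, x_2^{n_2} = x_3^{m_3}, …, x_{r-1}^{n_{r-1}} = x_r^{m_r}⟩. If gcd(m_i, n_j) = 1 for all indices with 1 ≤ i ≤ j ≤ r−1, then G_r is isomorphic to the cyclic group ℤ/(m_1 m_2 ⋯ m_r)ℤ. -/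
/-- The relators of the group `G_r = ⟨x_1, …, x_r : x_1^{m_1} = 1,
x_i^{n_i} = x_{i+1}^{m_{i+1}} (i = 1, …, r−1)⟩`, as elements of the free group
on `r = r' + 1` generators. -/
def linearRels (r' : ℕ) (m : Fin (r' + 1) → ℕ) (n : Fin r' → ℕ) :
    Set (FreeGroup (Fin (r' + 1))) :=
  {FreeGroup.of (0 : Fin (r' + 1)) ^ m 0} ∪
    Set.range (fun i : Fin r' =>
      FreeGroup.of i.castSucc ^ n i * (FreeGroup.of i.succ ^ m i.succ)⁻¹)

/-- Auxiliary recursion producing the exponents `b j` (as `linB m k r' (r' - j)`). -/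
def linB (m k : ℕ → ℕ) (r' : ℕ) : ℕ → ℕ
  | 0 => 1
  | t + 1 => linB m k r' t * m (r' - t) * k (r' - t - 1)

/-- If `gcd(m_i, n_j) = 1` for all `1 ≤ i ≤ j ≤ r − 1`, then
`G_r ≅ ℤ/(m_1 ⋯ m_r)ℤ`. -/
theorem linear_presented_group_cyclic (r' : ℕ)
    (m : Fin (r' + 1) → ℕ) (n : Fin r' → ℕ)
    (hm : ∀ i, 0 < m i) (hn : ∀ j, 0 < n j)
    (hgcd : ∀ i j : Fin r', i ≤ j → Nat.gcd (m i.castSucc) (n j) = 1) :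
    Nonempty (PresentedGroup (linearRels r' m n) ≃*
      Multiplicative (ZMod (∏ i, m i))) := by
  classical
  set N : ℕ := ∏ i, m i with hNdef
  have hNpos : 0 < N := Finset.prod_pos (fun i _ => hm i)
  haveI : NeZero N := ⟨hNpos.ne'⟩
  -- extend `m`, `n` to functions on `ℕ`
  set m' : ℕ → ℕ := fun i => if h : i < r' + 1 then m ⟨i, h⟩ else 1 with hm'def
  set n' : ℕ → ℕ := fun j => if h : j < r' then n ⟨j, h⟩ else 1 with hn'def
  have hm'fin : ∀ i : Fin (r' + 1), m' i.val = m i := by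
    intro i; simp only [hm'def, dif_pos i.isLt, Fin.eta]
  have hn'fin : ∀ j : Fin r', n' j.val = n j := by
    intro j; simp only [hn'def, dif_pos j.isLt, Fin.eta]
  have hm'pos : ∀ i, 0 < m' i := by
    intro i; simp only [hm'def]; split
    · exact hm _
    · norm_num
  -- the partial products `M j = m_0 ⋯ m_{j-1}`
  set M : ℕ → ℕ := fun j => ∏ i ∈ Finset.range j, m' i with hMdef
  have hMpos : ∀ j, 0 < M j := fun j => Finset.prod_pos (fun i _ => hm'pos i)
  have hMsucc : ∀ j, M (j + 1) = M j * m' j := fun j => Finset.prod_range_succ _ _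
  have hMN : M (r' + 1) = N := by
    show ∏ i ∈ Finset.range (r' + 1), m' i = ∏ i, m i
    rw [← Fin.prod_univ_eq_prod_range m' (r' + 1)]
    exact Finset.prod_congr rfl (fun i _ => hm'fin i)
  have hM1 : M 1 = m' 0 := by rw [hMsucc 0]; simp [hMdef]
  -- coprimality
  have hcop : ∀ j < r', Nat.Coprime (n' j) (M (j + 1)) := by
    intro j hj
    apply Nat.Coprime.prod_right
    intro i hi
    have hi' : i < j + 1 := Finset.mem_range.mp hi
    have hir : i < r' := lt_of_lt_of_le hi' hj
    have := hgcd ⟨i, hir⟩ ⟨j, hj⟩ (by exact Fin.mk_le_mk.mpr (Nat.lt_succ_iff.mp hi'))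
    have hcast : (Fin.castSucc ⟨i, hir⟩ : Fin (r' + 1)) = ⟨i, Nat.lt_succ_of_lt hir⟩ := rfl
    rw [hcast] at this
    have hmi : m' i = m ⟨i, Nat.lt_succ_of_lt hir⟩ := by
      simp only [hm'def, dif_pos (Nat.lt_succ_of_lt hir)]
    have hnj : n' j = n ⟨j, hj⟩ := by simp only [hn'def, dif_pos hj]
    rw [hmi, hnj]
    exact Nat.Coprime.symm this
  -- the inverses `k j` of `n' j` mod `M (j+1)`
  set k : ℕ → ℕ := fun j => ((n' j : ZMod (M (j + 1)))⁻¹).val with hkdef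
  have hk : ∀ j < r', n' j * k j ≡ 1 [MOD M (j + 1)] := by
    intro j hj
    haveI : NeZero (M (j + 1)) := ⟨(hMpos _).ne'⟩
    have : ((n' j * k j : ℕ) : ZMod (M (j + 1))) = ((1 : ℕ) : ZMod (M (j + 1))) := by
      push_cast
      rw [hkdef]
      rw [ZMod.natCast_zmod_val]
      exact ZMod.coe_mul_inv_eq_one _ (hcop j hj)
    exact (ZMod.natCast_eq_natCast_iff _ _ _).mp this
  -- the exponents `b j`
  set b : ℕ → ℕ := fun j => linB m' k r' (r' - j) with hbdef
  have hb_top : b r' = 1 := by simp [hbdef, Nat.sub_self, linB]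
  have hb_step : ∀ j < r', b j = b (j + 1) * m' (j + 1) * k j := by
    intro j hj
    have h1 : r' - j = (r' - (j + 1)) + 1 := by omega
    have h2 : r' - (r' - (j + 1)) = j + 1 := by omega
    have h3 : r' - (r' - (j + 1)) - 1 = j := by omega
    simp only [hbdef, h1, linB, h2, h3]
    simp
  -- key arithmetic fact 1 : N ∣ b j * M (j+1)
  have hL1 : ∀ t, t ≤ r' → N ∣ b (r' - t) * M (r' - t + 1) := by
    intro t
    induction t with
    | zero =>
      intro _
      simp only [Nat.sub_zero, hb_top, hMN, one_mul]
      exact dvd_rfl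
    | succ t ih =>
      intro ht
      have ih' := ih (le_of_lt (Nat.lt_of_succ_le ht))
      set j := r' - (t + 1) with hj
      have hjr : j < r' := by omega
      have hj1 : j + 1 = r' - t := by omega
      have : b j * M (j + 1) = k j * (b (j + 1) * M (j + 1 + 1)) := by
        rw [hb_step j hjr, hMsucc (j + 1)]
        ring
      rw [this, hj1]
      exact Dvd.dvd.mul_left ih' (k j)
  have hb1 : ∀ j, j ≤ r' → N ∣ b j * M (j + 1) := by
    intro j hj
    have := hL1 (r' - j) (by omega)
    rwa [show r' - (r' - j) = j by omega] at this
  -- key arithmetic fact 2 : b j * n' j ≡ b (j+1) * m' (j+1) [MOD N]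
  have hb2 : ∀ j < r', b j * n' j ≡ b (j + 1) * m' (j + 1) [MOD N] := by
    intro j hj
    have h1 := (hk j hj).mul_left' (b (j + 1) * m' (j + 1))
    have hdvd : N ∣ b (j + 1) * m' (j + 1) * M (j + 1) := by
      have h := hb1 (j + 1) hj
      rw [hMsucc (j + 1)] at h
      have e : b (j + 1) * (M (j + 1) * m' (j + 1)) = b (j + 1) * m' (j + 1) * M (j + 1) := by
        ring
      rw [← e]
      exact h
    have h2 := h1.of_dvd hdvd
    have e1 : b j * n' j = b (j + 1) * m' (j + 1) * (n' j * k j) := by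
      rw [hb_step j hj]; ring
    calc b j * n' j = b (j + 1) * m' (j + 1) * (n' j * k j) := e1
      _ ≡ b (j + 1) * m' (j + 1) * 1 [MOD N] := h2
      _ = b (j + 1) * m' (j + 1) := mul_one _
  -- the group `G` and its generators
  set G := PresentedGroup (linearRels r' m n) with hGdef
  have hmk1 : ∀ r ∈ linearRels r' m n, PresentedGroup.mk (linearRels r' m n) r = 1 := by
    intro r hr
    exact (QuotientGroup.eq_one_iff r).mpr (Subgroup.subset_normalClosure hr)
  set xg : ℕ → G := fun i => if h : i < r' + 1 then PresentedGroup.of ⟨i, h⟩ else 1 with hxgdef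
  have hxg_of : ∀ i : Fin (r' + 1), xg i.val = PresentedGroup.of i := by
    intro i; simp only [hxgdef, dif_pos i.isLt, Fin.eta]
  -- the relations in `G`
  have hx1 : xg 0 ^ m' 0 = 1 := by
    have h0 : (0 : ℕ) < r' + 1 := Nat.succ_pos _
    have hmem : FreeGroup.of (0 : Fin (r' + 1)) ^ m 0 ∈ linearRels r' m n := Or.inl rfl
    have := hmk1 _ hmem
    rw [map_pow] at this
    simp only [hxgdef, dif_pos h0]
    have h00 : (⟨0, h0⟩ : Fin (r' + 1)) = 0 := rfl
    rw [h00]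
    have hm0 : m' 0 = m 0 := hm'fin 0
    rw [hm0]
    exact this
  have hx2 : ∀ j < r', xg j ^ n' j = xg (j + 1) ^ m' (j + 1) := by
    intro j hj
    have i : Fin r' := ⟨j, hj⟩
    have hmem : FreeGroup.of (⟨j, hj⟩ : Fin r').castSucc ^ n ⟨j, hj⟩ *
        (FreeGroup.of (⟨j, hj⟩ : Fin r').succ ^ m (⟨j, hj⟩ : Fin r').succ)⁻¹ ∈
        linearRels r' m n := Or.inr ⟨⟨j, hj⟩, rfl⟩
    have h := hmk1 _ hmem
    rw [map_mul, map_inv, map_pow, map_pow, mul_inv_eq_one] at h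
    have hv1 : (((⟨j, hj⟩ : Fin r').castSucc : Fin (r' + 1)) : ℕ) = j := by simp
    have hv2 : (((⟨j, hj⟩ : Fin r').succ : Fin (r' + 1)) : ℕ) = j + 1 := by simp
    have e1 : xg j = PresentedGroup.of (⟨j, hj⟩ : Fin r').castSucc := by
      rw [← hxg_of ((⟨j, hj⟩ : Fin r').castSucc), hv1]
    have e2 : xg (j + 1) = PresentedGroup.of (⟨j, hj⟩ : Fin r').succ := by
      rw [← hxg_of ((⟨j, hj⟩ : Fin r').succ), hv2]
    rw [e1, e2]
    have e3 : n' j = n ⟨j, hj⟩ := by simp only [hn'def, dif_pos hj]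
    have e4 : m' (j + 1) = m (⟨j, hj⟩ : Fin r').succ := by
      have : ((⟨j, hj⟩ : Fin r').succ : Fin (r' + 1)).val = j + 1 := rfl
      rw [← this, hm'fin]
    rw [e3, e4]
    exact h
  -- orders : xg j ^ M (j+1) = 1
  have hord : ∀ j, j ≤ r' → xg j ^ M (j + 1) = 1 := by
    intro j
    induction j with
    | zero => intro _; rw [hM1]; exact hx1
    | succ t ih =>
      intro ht
      have htr : t < r' := ht
      have ih' := ih (le_of_lt htr)
      rw [hMsucc (t + 1), mul_comm, pow_mul, ← hx2 t htr, ← pow_mul, mul_comm, pow_mul,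
        ih', one_pow]
  -- every generator is a power of the last one
  have hXN : xg r' ^ N = 1 := by rw [← hMN]; exact hord r' le_rfl
  have hxb' : ∀ t, t ≤ r' → xg (r' - t) = xg r' ^ b (r' - t) := by
    intro t
    induction t with
    | zero => intro _; simp only [Nat.sub_zero, hb_top, pow_one]
    | succ t ih =>
      intro ht
      have ih' := ih (le_of_lt (Nat.lt_of_succ_le ht))
      set j := r' - (t + 1) with hjd
      have hjr : j < r' := by omega
      have hj1 : j + 1 = r' - t := by omega
      have hfix : xg j ^ (n' j * k j) = xg j := by
        have hdvd : orderOf (xg j) ∣ M (j + 1) :=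
          orderOf_dvd_of_pow_eq_one (hord j (le_of_lt hjr))
        have hmod : n' j * k j ≡ 1 [MOD orderOf (xg j)] := (hk j hjr).of_dvd hdvd
        calc xg j ^ (n' j * k j) = xg j ^ 1 := pow_eq_pow_iff_modEq.mpr hmod
        _ = xg j := pow_one _
      have : xg j = xg r' ^ (b (j + 1) * m' (j + 1) * k j) := by
        calc xg j = xg j ^ (n' j * k j) := hfix.symm
          _ = (xg j ^ n' j) ^ k j := pow_mul _ _ _
          _ = (xg (j + 1) ^ m' (j + 1)) ^ k j := by rw [hx2 j hjr]
          _ = ((xg r' ^ b (j + 1)) ^ m' (j + 1)) ^ k j := by rw [hj1, ih', ← hj1]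
          _ = xg r' ^ (b (j + 1) * m' (j + 1) * k j) := by
              rw [← pow_mul, ← pow_mul, mul_assoc]
      rw [this, ← hb_step j hjr]
  have hxb : ∀ i : Fin (r' + 1), PresentedGroup.of i = xg r' ^ b i.val := by
    intro i
    have hi : i.val ≤ r' := Nat.lt_succ_iff.mp i.isLt
    have := hxb' (r' - i.val) (by omega)
    rw [show r' - (r' - i.val) = i.val by omega] at this
    rw [← hxg_of i]
    exact this
  -- the homomorphism to `ZMod N`
  set f : Fin (r' + 1) → Multiplicative (ZMod N) :=
    fun i => Multiplicative.ofAdd ((b i.val : ℕ) : ZMod N) with hfdef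
  have hrels : ∀ r ∈ linearRels r' m n, FreeGroup.lift f r = 1 := by
    rintro r (rfl | ⟨i, rfl⟩)
    · rw [map_pow, FreeGroup.lift_apply_of, hfdef]
      show Multiplicative.ofAdd ((b (0 : Fin (r' + 1)).val : ℕ) : ZMod N) ^ m 0 = 1
      rw [← ofAdd_nsmul, nsmul_eq_mul]
      have : ((m 0 : ZMod N) * ((b (0 : Fin (r' + 1)).val : ℕ) : ZMod N)) = 0 := by
        rw [← Nat.cast_mul]
        rw [ZMod.natCast_eq_zero_iff]
        have h0 : ((0 : Fin (r' + 1)) : ℕ) = 0 := Fin.val_zero _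
        rw [h0]
        have h := hb1 0 (Nat.zero_le _)
        rw [hM1] at h
        have e : m' ((0 : Fin (r' + 1)) : ℕ) = m 0 := hm'fin 0
        rw [h0] at e
        rw [e] at h
        rw [mul_comm]
        exact h
      rw [this]
      rfl
    · rw [map_mul, map_inv, map_pow, map_pow, FreeGroup.lift_apply_of, FreeGroup.lift_apply_of,
        mul_inv_eq_one, hfdef]
      show Multiplicative.ofAdd ((b i.castSucc.val : ℕ) : ZMod N) ^ n i =
        Multiplicative.ofAdd ((b i.succ.val : ℕ) : ZMod N) ^ m i.succ
      rw [← ofAdd_nsmul, ← ofAdd_nsmul]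
      congr 1
      rw [nsmul_eq_mul, nsmul_eq_mul, ← Nat.cast_mul, ← Nat.cast_mul]
      rw [ZMod.natCast_eq_natCast_iff]
      have e1 : i.castSucc.val = i.val := rfl
      have e2 : i.succ.val = i.val + 1 := rfl
      rw [e1, e2]
      have := hb2 i.val i.isLt
      rw [hn'fin i] at this
      have e4 : m' (i.val + 1) = m i.succ := by
        have : (i.succ : Fin (r' + 1)).val = i.val + 1 := rfl
        rw [← this, hm'fin]
      rw [e4] at this
      calc n i * b i.val = b i.val * n i := mul_comm _ _
        _ ≡ b (i.val + 1) * m i.succ [MOD N] := this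
        _ = m i.succ * b (i.val + 1) := mul_comm _ _
  set φ : G →* Multiplicative (ZMod N) := PresentedGroup.toGroup hrels with hφdef
  have hφof : ∀ i : Fin (r' + 1), φ (PresentedGroup.of i) =
      Multiplicative.ofAdd ((b i.val : ℕ) : ZMod N) := by
    intro i; exact PresentedGroup.toGroup.of hrels
  -- the last generator
  have hlastval : (Fin.last r').val = r' := rfl
  have hxglast : xg r' = PresentedGroup.of (Fin.last r') := by
    rw [← hxg_of (Fin.last r'), hlastval]
  have hφlast : φ (PresentedGroup.of (Fin.last r')) = Multiplicative.ofAdd (1 : ZMod N) := by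
    rw [hφof, hlastval, hb_top, Nat.cast_one]
  -- surjectivity
  have hsurj : Function.Surjective φ := by
    intro z
    refine ⟨PresentedGroup.of (Fin.last r') ^ (Multiplicative.toAdd z).val, ?_⟩
    rw [map_pow, hφlast, ← ofAdd_nsmul, nsmul_eq_mul, mul_one]
    rw [ZMod.natCast_zmod_val]
    exact ofAdd_toAdd z
  -- injectivity
  have hgen' : ∀ w : G, w ∈ Subgroup.zpowers (PresentedGroup.of (Fin.last r') : G) := by
    intro w
    refine PresentedGroup.generated_by _ _ ?_ w
    intro i
    rw [hxb i, hxglast]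
    exact Subgroup.pow_mem _ (Subgroup.mem_zpowers _) _
  have hinj : Function.Injective φ := by
    rw [injective_iff_map_eq_one]
    intro w hw
    obtain ⟨t, ht⟩ := hgen' w
    rw [← ht] at hw ⊢
    rw [map_zpow, hφlast, ← ofAdd_zsmul] at hw
    have : ((t • (1 : ZMod N)) : ZMod N) = 0 := hw
    rw [zsmul_eq_mul, mul_one] at this
    obtain ⟨s, hs⟩ := (ZMod.intCast_zmod_eq_zero_iff_dvd t N).mp this
    rw [hs]
    show PresentedGroup.of (Fin.last r') ^ ((N : ℤ) * s) = 1
    rw [zpow_mul]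
    have : (PresentedGroup.of (Fin.last r') : G) ^ (N : ℤ) = 1 := by
      rw [zpow_natCast, ← hxglast]
      exact hXN
    rw [this, one_zpow]
  exact ⟨MulEquiv.ofBijective φ ⟨hinj, hsurj⟩⟩
end

section
/- Let r ≥ 1 and let m_1, …, m_r and n_1, …, n_{r-1} be positive integers with gcd(m_i, n_j) = 1 for all 1 ≤ i ≤ j ≤ r−1. Then the group G_r presented by ⟨x_1, …, x_r : x_1^{m_1} = 1, x_i^{n_i} = x_{i+1}^{m_{i+1}} for i = 1, …, r−1⟩ is generated by the single element x_r; in particular G_r is cyclic. -/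
section aux

variable {G : Type*} [Group G]

/-- key arithmetic-group step -/
lemma mem_zpowers_of_pow_eq_one_of_coprime {g h : G} {M N k : ℕ}
    (hgM : g ^ M = 1) (hco : Nat.gcd M N = 1) (hrel : g ^ N = h ^ k) :
    g ∈ Subgroup.zpowers h := by
  have h1 : (1 : ℤ) = M * Nat.gcdA M N + N * Nat.gcdB M N := by
    have := Nat.gcd_eq_gcd_ab M N
    rw [hco] at this; exact_mod_cast this
  have : g = (h ^ k) ^ Nat.gcdB M N := by
    calc g = g ^ (1 : ℤ) := (zpow_one g).symm
    _ = g ^ ((M : ℤ) * Nat.gcdA M N + N * Nat.gcdB M N) := by rw [← h1]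
    _ = (g ^ (M : ℤ)) ^ Nat.gcdA M N * (g ^ (N : ℤ)) ^ Nat.gcdB M N := by
        rw [← zpow_mul, ← zpow_mul, ← zpow_add]
    _ = (h ^ k) ^ Nat.gcdB M N := by
        rw [zpow_natCast, zpow_natCast, hgM, one_zpow, one_mul, hrel]
  rw [this, ← zpow_natCast h k, ← zpow_mul]
  exact ⟨_, rfl⟩

end aux


/-- If `gcd(m_i, n_j) = 1` for all `1 ≤ i ≤ j ≤ r − 1`, then `G_r` is
generated by the single element `x_r`; in particular `G_r` is cyclic. -/
theorem linear_presented_group_generated_by_last (r' : ℕ)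
    (m : Fin (r' + 1) → ℕ) (n : Fin r' → ℕ)
    (hm : ∀ i, 0 < m i) (hn : ∀ j, 0 < n j)
    (hgcd : ∀ i j : Fin r', i ≤ j → Nat.gcd (m i.castSucc) (n j) = 1) :
    Subgroup.zpowers
        (PresentedGroup.of (rels := linearRels r' m n) (Fin.last r')) = ⊤ ∧
      IsCyclic (PresentedGroup (linearRels r' m n)) := by
  set rels := linearRels r' m n with hrels
  set g : Fin (r' + 1) → PresentedGroup rels := fun i => PresentedGroup.of i with hg
  -- relators map to 1
  have hone : ∀ w ∈ rels, PresentedGroup.mk rels w = 1 := by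
    intro w hw
    exact (QuotientGroup.eq_one_iff w).mpr (Subgroup.subset_normalClosure hw)
  have rel0 : g 0 ^ m 0 = 1 := by
    have := hone _ (Set.mem_union_left _ rfl)
    rwa [map_pow] at this
  have relS : ∀ i : Fin r', g i.castSucc ^ n i = g i.succ ^ m i.succ := by
    intro i
    have := hone _ (Set.mem_union_right _ ⟨i, rfl⟩)
    rw [map_mul, map_inv, map_pow, map_pow] at this
    exact (mul_inv_eq_one).mp this
  -- cumulative products
  let M : Fin (r' + 1) → ℕ := Fin.induction (m 0) (fun i ih => m i.succ * ih)
  have hM0 : M 0 = m 0 := rfl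
  have hMS : ∀ i : Fin r', M i.succ = m i.succ * M i.castSucc := fun i =>
    Fin.induction_succ _ _ i
  -- order claim
  have hord : ∀ i : Fin (r' + 1), g i ^ M i = 1 := by
    intro i
    induction i using Fin.induction with
    | zero => rw [hM0]; exact rel0
    | succ i ih =>
      rw [hMS i, pow_mul, ← relS i, ← pow_mul, mul_comm, pow_mul, ih, one_pow]
  -- coprimality claim
  have hcop : ∀ k : ℕ, ∀ i j : Fin r', i.val = k → i ≤ j → Nat.gcd (M i.castSucc) (n j) = 1 := by
    intro k
    induction k with
    | zero =>
      intro i j hik hij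
      have hi0 : i.castSucc = 0 := Fin.ext (by simp [hik])
      rw [hi0, hM0]
      have hm0 : m i.castSucc = m 0 := by rw [hi0]
      rw [← hm0]
      exact hgcd i j hij
    | succ k ih =>
      intro i j hik hij
      have hk : k < r' := by omega
      set i' : Fin r' := ⟨k, hk⟩ with hi'
      have hcs : i.castSucc = i'.succ := Fin.ext (by simp [hik, hi'])
      have hcs2 : m i.castSucc = m i'.succ := by rw [hcs]
      rw [hcs, hMS i']
      have h1 : Nat.Coprime (m i'.succ) (n j) := by
        rw [← hcs2]; exact hgcd i j hij
      have h2 : Nat.Coprime (M i'.castSucc) (n j) := by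
        exact ih i' j rfl (le_trans (by simp [Fin.le_def, hi']; omega) hij)
      exact Nat.Coprime.mul h1 h2
  -- chain
  have hchain : ∀ i : Fin r', g i.castSucc ∈ Subgroup.zpowers (g i.succ) := by
    intro i
    exact mem_zpowers_of_pow_eq_one_of_coprime (hord i.castSucc) (hcop i.val i i rfl le_rfl) (relS i)
  have hlast : ∀ i : Fin (r' + 1), g i ∈ Subgroup.zpowers (g (Fin.last r')) := by
    intro i
    induction i using Fin.reverseInduction with
    | last => exact ⟨1, zpow_one _⟩
    | cast i ih =>
      exact Subgroup.zpowers_le.mpr ih (hchain i)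
  have htop : Subgroup.zpowers (g (Fin.last r')) = ⊤ := by
    rw [eq_top_iff]
    intro x _
    exact PresentedGroup.generated_by rels _ (fun j => hlast j) x
  exact ⟨htop, ⟨⟨g (Fin.last r'), fun x => by show x ∈ Subgroup.zpowers (g (Fin.last r')); rw [htop]; exact Subgroup.mem_top x⟩⟩⟩
end
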